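/- arXiv:2503.11200 — 3 statements merged into one kernel-verified Lean document; each statement's English description precedes it below -/
import Mathlib

section
/- Let ρ_max > 0, α ≥ 0, and let ρ : [-1,1] → [0, ρ_max] be measurable. If ξ ∈ (-1,1) satisfies ∫_{-1}^{ξ} (1 + α ρ(y)) dy = ∫_{ξ}^{1} (1 + α ρ(y)) dy, then |ξ| ≤ 1 − δ where δ = (1 + (α ρ_max)/2)^{-1}. -/
open MeasureTheory Set

/-- Quantitative interior bound for the turning point with affine cost
`c(ρ) = 1 + α ρ`: the turning point satisfies `|ξ| ≤ 1 - δ` with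
`δ = (1 + α ρmax / 2)⁻¹`. -/
theorem turning_point_interior_bound
    (ρmax : ℝ) (hρmax : 0 < ρmax) (α : ℝ) (hα : 0 ≤ α)
    (ρ : ℝ → ℝ) (hρ_meas : Measurable ρ)
    (hρ_range : ∀ x, ρ x ∈ Icc 0 ρmax)
    (ξ : ℝ) (hξ : ξ ∈ Ioo (-1 : ℝ) 1)
    (heq : (∫ y in (-1 : ℝ)..ξ, (1 + α * ρ y)) = ∫ y in ξ..(1 : ℝ), (1 + α * ρ y)) :
    |ξ| ≤ 1 - (1 + α * ρmax / 2)⁻¹ := by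
  obtain ⟨hξ1, hξ2⟩ := hξ
  set M := α * ρmax with hM
  have hM0 : 0 ≤ M := mul_nonneg hα hρmax.le
  have hlo : ∀ y, (1:ℝ) ≤ 1 + α * ρ y := fun y => by
    nlinarith [(hρ_range y).1]
  have hhi : ∀ y, 1 + α * ρ y ≤ 1 + M := fun y => by
    have := (hρ_range y).2
    nlinarith [(hρ_range y).1]
  have hint : ∀ a b : ℝ, IntervalIntegrable (fun y => 1 + α * ρ y) volume a b := by
    intro a b
    rw [intervalIntegrable_iff]
    have hconst : IntegrableOn (fun _ : ℝ => 1 + M) (Set.uIoc a b) volume :=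
      integrableOn_const measure_Ioc_lt_top.ne
    refine Integrable.mono' hconst
      ((measurable_const.add (hρ_meas.const_mul α)).aestronglyMeasurable) ?_
    filter_upwards with y
    rw [Real.norm_eq_abs, abs_of_nonneg (le_trans zero_le_one (hlo y))]
    exact hhi y
  have hmeas : ∀ a b : ℝ, a ≤ b →
      (∫ y in a..b, (1 + α * ρ y)) ≥ b - a ∧
      (∫ y in a..b, (1 + α * ρ y)) ≤ (b - a) * (1 + M) := by
    intro a b hab
    constructor
    · have := intervalIntegral.integral_mono_on hab (intervalIntegrable_const (c := (1:ℝ)))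
        (hint a b) (fun y _ => hlo y)
      simpa using this
    · have := intervalIntegral.integral_mono_on hab (hint a b)
        (intervalIntegrable_const (c := 1 + M)) (fun y _ => hhi y)
      calc ∫ y in a..b, (1 + α * ρ y) ≤ ∫ _ in a..b, (1 + M) := this
      _ = (b - a) * (1 + M) := by simp [smul_eq_mul]; ring
  obtain ⟨hL1, hL2⟩ := hmeas (-1) ξ hξ1.le
  obtain ⟨hR1, hR2⟩ := hmeas ξ 1 hξ2.le
  have h1 : ξ + 1 ≤ (1 - ξ) * (1 + M) := by
    calc ξ + 1 = ξ - (-1) := by ring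
    _ ≤ ∫ y in (-1:ℝ)..ξ, (1 + α * ρ y) := hL1
    _ = ∫ y in ξ..(1:ℝ), (1 + α * ρ y) := heq
    _ ≤ (1 - ξ) * (1 + M) := hR2
  have h2 : 1 - ξ ≤ (ξ + 1) * (1 + M) := by
    calc 1 - ξ ≤ ∫ y in ξ..(1:ℝ), (1 + α * ρ y) := hR1
    _ = ∫ y in (-1:ℝ)..ξ, (1 + α * ρ y) := heq.symm
    _ ≤ (ξ - (-1)) * (1 + M) := hL2
    _ = (ξ + 1) * (1 + M) := by ring
  have hpos : (0:ℝ) < 1 + M / 2 := by linarith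
  rw [abs_le]
  constructor
  · rw [neg_le, ← sub_nonneg]
    have : 1 - (1 + M / 2)⁻¹ - (-ξ) = ((ξ + 1) * (1 + M) - (1 - ξ)) / (2 + M) := by
      rw [inv_eq_one_div]
      field_simp
      ring
    rw [this]
    apply div_nonneg (by linarith) (by linarith)
  · rw [← sub_nonneg]
    have : 1 - (1 + M / 2)⁻¹ - ξ = ((1 - ξ) * (1 + M) - (ξ + 1)) / (2 + M) := by
      rw [inv_eq_one_div]
      field_simp
      ring
    rw [this]
    apply div_nonneg (by linarith) (by linarith)
end

section
/- Let ρ_max > 0, α₁, α₂ ≥ 0, and let ρ̄₁, ρ̄₂ : [-1,1] → [0, ρ_max] be integrable. Suppose ξ₁, ξ₂ ∈ (-1,1) satisfy, for i = 1, 2, ∫_{-1}^{ξ_i} (1 + α_i ρ̄_i(y)) dy = ∫_{ξ_i}^{1} (1 + α_i ρ̄_i(y)) dy. Then 2 |ξ₁ − ξ₂| ≤ ∫_{-1}^{1} |α₂ ρ̄₂(x) − α₁ ρ̄₁(x)| dx. -/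
open MeasureTheory Set

private lemma tp_aux
    (α₁ α₂ : ℝ) (hα₂ : 0 ≤ α₂)
    (ρ₁ ρ₂ : ℝ → ℝ)
    (hρ₁_int : IntervalIntegrable ρ₁ volume (-1 : ℝ) 1)
    (hρ₂_int : IntervalIntegrable ρ₂ volume (-1 : ℝ) 1)
    (hρ₂_nn : ∀ x, 0 ≤ ρ₂ x)
    (ξ₁ ξ₂ : ℝ) (hξ₁ : ξ₁ ∈ Ioo (-1 : ℝ) 1) (hξ₂ : ξ₂ ∈ Ioo (-1 : ℝ) 1)
    (hle : ξ₁ ≤ ξ₂)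
    (heq₁ : (∫ y in (-1 : ℝ)..ξ₁, (1 + α₁ * ρ₁ y)) = ∫ y in ξ₁..(1 : ℝ), (1 + α₁ * ρ₁ y))
    (heq₂ : (∫ y in (-1 : ℝ)..ξ₂, (1 + α₂ * ρ₂ y)) = ∫ y in ξ₂..(1 : ℝ), (1 + α₂ * ρ₂ y)) :
    2 * (ξ₂ - ξ₁) ≤ ∫ x in (-1 : ℝ)..(1 : ℝ), |α₂ * ρ₂ x - α₁ * ρ₁ x| := by
  obtain ⟨h1l, h1r⟩ := hξ₁
  obtain ⟨h2l, h2r⟩ := hξ₂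
  have hsub : ∀ a b : ℝ, -1 ≤ a → a ≤ b → b ≤ 1 → uIcc a b ⊆ uIcc (-1 : ℝ) 1 := by
    intro a b ha hab hb
    rw [uIcc_of_le hab, uIcc_of_le (by norm_num : (-1:ℝ) ≤ 1)]
    exact Icc_subset_Icc ha hb
  -- integrable functions
  have hc₁ : IntervalIntegrable (fun y => 1 + α₁ * ρ₁ y) volume (-1 : ℝ) 1 :=
    intervalIntegrable_const.add (hρ₁_int.const_mul α₁)
  have hc₂ : IntervalIntegrable (fun y => 1 + α₂ * ρ₂ y) volume (-1 : ℝ) 1 :=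
    intervalIntegrable_const.add (hρ₂_int.const_mul α₂)
  have hg : IntervalIntegrable (fun y => α₂ * ρ₂ y - α₁ * ρ₁ y) volume (-1 : ℝ) 1 :=
    (hρ₂_int.const_mul α₂).sub (hρ₁_int.const_mul α₁)
  have hga : IntervalIntegrable (fun y => |α₂ * ρ₂ y - α₁ * ρ₁ y|) volume (-1 : ℝ) 1 := hg.abs
  set g : ℝ → ℝ := fun y => α₂ * ρ₂ y - α₁ * ρ₁ y with hgdef
  -- split identities: ∫_{-1}^{1} c_i = 2 ∫_{-1}^{ξ_i} c_i
  have hsplit₁ : (∫ y in (-1 : ℝ)..(1:ℝ), (1 + α₁ * ρ₁ y))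
      = 2 * ∫ y in (-1 : ℝ)..ξ₁, (1 + α₁ * ρ₁ y) := by
    rw [← intervalIntegral.integral_add_adjacent_intervals
      (hc₁.mono_set (hsub _ _ le_rfl h1l.le h1r.le))
      (hc₁.mono_set (hsub _ _ h1l.le h1r.le le_rfl)), ← heq₁]
    ring
  have hsplit₂ : (∫ y in (-1 : ℝ)..(1:ℝ), (1 + α₂ * ρ₂ y))
      = 2 * ∫ y in (-1 : ℝ)..ξ₂, (1 + α₂ * ρ₂ y) := by
    rw [← intervalIntegral.integral_add_adjacent_intervals
      (hc₂.mono_set (hsub _ _ le_rfl h2l.le h2r.le))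
      (hc₂.mono_set (hsub _ _ h2l.le h2r.le le_rfl)), ← heq₂]
    ring
  -- key identity: 2 ∫_{ξ₁}^{ξ₂} c₂ = ∫_{ξ₁}^{1} g - ∫_{-1}^{ξ₁} g
  have hkey : 2 * (∫ y in ξ₁..ξ₂, (1 + α₂ * ρ₂ y))
      = (∫ y in ξ₁..(1:ℝ), g y) - ∫ y in (-1:ℝ)..ξ₁, g y := by
    have e1 : (∫ y in ξ₁..ξ₂, (1 + α₂ * ρ₂ y))
        = (∫ y in (-1:ℝ)..ξ₂, (1 + α₂ * ρ₂ y)) - ∫ y in (-1:ℝ)..ξ₁, (1 + α₂ * ρ₂ y) := by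
      rw [← intervalIntegral.integral_add_adjacent_intervals
        (hc₂.mono_set (hsub _ _ le_rfl h1l.le h1r.le))
        (hc₂.mono_set (hsub _ _ h1l.le hle h2r.le))]
      ring
    have e2 : ∀ a b : ℝ, -1 ≤ a → a ≤ b → b ≤ 1 →
        (∫ y in a..b, g y)
        = (∫ y in a..b, (1 + α₂ * ρ₂ y)) - ∫ y in a..b, (1 + α₁ * ρ₁ y) := by
      intro a b ha hab hb
      rw [← intervalIntegral.integral_sub (hc₂.mono_set (hsub _ _ ha hab hb))
        (hc₁.mono_set (hsub _ _ ha hab hb))]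
      congr 1
      funext y
      simp only [hgdef]; ring
    have e3 : (∫ y in (-1:ℝ)..(1:ℝ), g y)
        = (∫ y in (-1:ℝ)..ξ₁, g y) + ∫ y in ξ₁..(1:ℝ), g y :=
      (intervalIntegral.integral_add_adjacent_intervals
        (hg.mono_set (hsub _ _ le_rfl h1l.le h1r.le))
        (hg.mono_set (hsub _ _ h1l.le h1r.le le_rfl))).symm
    have e4 := e2 (-1) 1 le_rfl (by norm_num) le_rfl
    have e5 := e2 (-1) ξ₁ le_rfl h1l.le h1r.le
    -- 2∫_{ξ₁}^{ξ₂} c₂ = ∫_{-1}^{1} c₂ - 2∫_{-1}^{ξ₁} c₂  (using hsplit₂)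
    --                = (∫_{-1}^{1} c₂ - ∫_{-1}^{1} c₁) - 2(∫_{-1}^{ξ₁} c₂ - ∫_{-1}^{ξ₁} c₁)  (using hsplit₁)
    have : 2 * (∫ y in ξ₁..ξ₂, (1 + α₂ * ρ₂ y))
        = (∫ y in (-1:ℝ)..(1:ℝ), g y) - 2 * ∫ y in (-1:ℝ)..ξ₁, g y := by
      rw [e4, e5, e1]
      rw [hsplit₁] at *
      linarith [hsplit₂]
    rw [this, e3]; ring
  -- lower bound: 2(ξ₂ - ξ₁) ≤ 2 ∫_{ξ₁}^{ξ₂} c₂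
  have hlow : ξ₂ - ξ₁ ≤ ∫ y in ξ₁..ξ₂, (1 + α₂ * ρ₂ y) := by
    have : (∫ y in ξ₁..ξ₂, (1:ℝ)) ≤ ∫ y in ξ₁..ξ₂, (1 + α₂ * ρ₂ y) := by
      apply intervalIntegral.integral_mono_on hle intervalIntegrable_const
        (hc₂.mono_set (hsub _ _ h1l.le hle h2r.le))
      intro x _
      nlinarith [hρ₂_nn x]
    simpa using this
  -- upper bound: ∫_{ξ₁}^{1} g - ∫_{-1}^{ξ₁} g ≤ ∫_{-1}^{1} |g|
  have hub : (∫ y in ξ₁..(1:ℝ), g y) - (∫ y in (-1:ℝ)..ξ₁, g y)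
      ≤ ∫ x in (-1:ℝ)..(1:ℝ), |g x| := by
    have ha3 : (∫ y in (-1:ℝ)..(1:ℝ), |g y|)
        = (∫ y in (-1:ℝ)..ξ₁, |g y|) + ∫ y in ξ₁..(1:ℝ), |g y| :=
      (intervalIntegral.integral_add_adjacent_intervals
        (hga.mono_set (hsub _ _ le_rfl h1l.le h1r.le))
        (hga.mono_set (hsub _ _ h1l.le h1r.le le_rfl))).symm
    have b1 : (∫ y in ξ₁..(1:ℝ), g y) ≤ ∫ y in ξ₁..(1:ℝ), |g y| :=
      intervalIntegral.integral_mono_on h1r.le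
        (hg.mono_set (hsub _ _ h1l.le h1r.le le_rfl))
        (hga.mono_set (hsub _ _ h1l.le h1r.le le_rfl))
        (fun x _ => le_abs_self _)
    have b2 : -(∫ y in (-1:ℝ)..ξ₁, g y) ≤ ∫ y in (-1:ℝ)..ξ₁, |g y| := by
      have : (∫ y in (-1:ℝ)..ξ₁, -g y) ≤ ∫ y in (-1:ℝ)..ξ₁, |g y| :=
        intervalIntegral.integral_mono_on h1l.le
          ((hg.mono_set (hsub _ _ le_rfl h1l.le h1r.le)).neg)
          (hga.mono_set (hsub _ _ le_rfl h1l.le h1r.le))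
          (fun x _ => neg_le_abs _)
      simpa [intervalIntegral.integral_neg] using this
    rw [ha3]; linarith
  calc 2 * (ξ₂ - ξ₁) ≤ 2 * ∫ y in ξ₁..ξ₂, (1 + α₂ * ρ₂ y) := by linarith
    _ = (∫ y in ξ₁..(1:ℝ), g y) - ∫ y in (-1:ℝ)..ξ₁, g y := hkey
    _ ≤ ∫ x in (-1:ℝ)..(1:ℝ), |g x| := hub

/-- Comparison of the turning points associated with two affine costs
`cᵢ(ρ) = 1 + αᵢ ρ` and two densities:
`2 |ξ₁ − ξ₂| ≤ ∫_{-1}^{1} |α₂ ρ̄₂ − α₁ ρ̄₁|`. -/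
theorem turning_point_comparison
    (ρmax : ℝ) (hρmax : 0 < ρmax)
    (α₁ α₂ : ℝ) (hα₁ : 0 ≤ α₁) (hα₂ : 0 ≤ α₂)
    (ρ₁ ρ₂ : ℝ → ℝ)
    (hρ₁_int : IntervalIntegrable ρ₁ volume (-1 : ℝ) 1)
    (hρ₂_int : IntervalIntegrable ρ₂ volume (-1 : ℝ) 1)
    (hρ₁_range : ∀ x, ρ₁ x ∈ Icc 0 ρmax)
    (hρ₂_range : ∀ x, ρ₂ x ∈ Icc 0 ρmax)
    (ξ₁ ξ₂ : ℝ) (hξ₁ : ξ₁ ∈ Ioo (-1 : ℝ) 1) (hξ₂ : ξ₂ ∈ Ioo (-1 : ℝ) 1)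
    (heq₁ : (∫ y in (-1 : ℝ)..ξ₁, (1 + α₁ * ρ₁ y)) = ∫ y in ξ₁..(1 : ℝ), (1 + α₁ * ρ₁ y))
    (heq₂ : (∫ y in (-1 : ℝ)..ξ₂, (1 + α₂ * ρ₂ y)) = ∫ y in ξ₂..(1 : ℝ), (1 + α₂ * ρ₂ y)) :
    2 * |ξ₁ - ξ₂| ≤ ∫ x in (-1 : ℝ)..(1 : ℝ), |α₂ * ρ₂ x - α₁ * ρ₁ x| := by
  rcases le_total ξ₁ ξ₂ with h | h
  · rw [abs_sub_comm, abs_of_nonneg (by linarith)]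
    exact tp_aux α₁ α₂ hα₂ ρ₁ ρ₂ hρ₁_int hρ₂_int (fun x => (hρ₂_range x).1)
      ξ₁ ξ₂ hξ₁ hξ₂ h heq₁ heq₂
  · rw [abs_of_nonneg (by linarith)]
    have := tp_aux α₂ α₁ hα₁ ρ₂ ρ₁ hρ₂_int hρ₁_int (fun x => (hρ₁_range x).1)
      ξ₂ ξ₁ hξ₂ hξ₁ h heq₂ heq₁
    calc 2 * (ξ₁ - ξ₂) ≤ ∫ x in (-1:ℝ)..(1:ℝ), |α₁ * ρ₁ x - α₂ * ρ₂ x| := this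
      _ = ∫ x in (-1:ℝ)..(1:ℝ), |α₂ * ρ₂ x - α₁ * ρ₁ x| := by
        congr 1; funext x; exact abs_sub_comm _ _
end

section
/- Let ρ : [0,T] × (-1,1) → [0, ρ_max] be measurable, α ≥ 0, and for each t let ξ(t) ∈ (-1,1) be the unique solution of ∫_{-1}^{ξ(t)}(1 + αρ(t,y)) dy = ∫_{ξ(t)}^{1}(1 + αρ(t,y)) dy. If t ↦ ρ(t,·) is continuous from [0,T] to L¹(-1,1), then ξ : [0,T] → (-1,1) is continuous, and moreover |ξ(t) − ξ(s)| ≤ (α/2) ‖ρ(t,·) − ρ(s,·)‖_{L¹(-1,1)} for all s, t ∈ [0,T]. -/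
open MeasureTheory Set

/-- Continuity in time of the turning curve, inherited from L¹-in-time
continuity of the density, with the quantitative modulus
`|ξ(t) − ξ(s)| ≤ (α/2) ‖ρ(t,·) − ρ(s,·)‖_{L¹(-1,1)}`. -/
theorem turning_curve_time_continuity
    (ρmax : ℝ) (hρmax : 0 < ρmax) (α : ℝ) (hα : 0 ≤ α)
    (T : ℝ) (hT : 0 < T)
    (ρ : ℝ → ℝ → ℝ) (hρ_meas : ∀ t, Measurable (ρ t))
    (hρ_range : ∀ t x, ρ t x ∈ Icc 0 ρmax)
    (ξ : ℝ → ℝ)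
    (hξ_mem : ∀ t ∈ Icc 0 T, ξ t ∈ Ioo (-1 : ℝ) 1)
    (hξ_eq : ∀ t ∈ Icc 0 T,
      (∫ y in (-1 : ℝ)..(ξ t), (1 + α * ρ t y)) =
        ∫ y in (ξ t)..(1 : ℝ), (1 + α * ρ t y))
    (hL1cont : ∀ s ∈ Icc 0 T, ∀ ε : ℝ, 0 < ε → ∃ δ : ℝ, 0 < δ ∧
      ∀ t ∈ Icc 0 T, |t - s| < δ →
        (∫ x in (-1 : ℝ)..(1 : ℝ), |ρ t x - ρ s x|) < ε) :
    ContinuousOn ξ (Icc 0 T) ∧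
    ∀ s ∈ Icc 0 T, ∀ t ∈ Icc 0 T,
      |ξ t - ξ s| ≤ α / 2 * ∫ x in (-1 : ℝ)..(1 : ℝ), |ρ t x - ρ s x| := by
  -- basic integrability
  have hInt : ∀ t a b : ℝ, IntervalIntegrable (ρ t) volume a b := by
    intro t a b
    rw [intervalIntegrable_iff]
    refine Integrable.mono' (g := fun _ => ρmax)
      ((MeasureTheory.integrableOn_const_iff (C := ρmax)).mpr (Or.inr measure_Ioc_lt_top))
      ((hρ_meas t).aestronglyMeasurable.restrict)
      (ae_of_all _ fun x => ?_)
    have h := hρ_range t x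
    rw [Real.norm_eq_abs, abs_of_nonneg h.1]
    exact h.2
  have hInt1 : ∀ t a b : ℝ, IntervalIntegrable (fun y => 1 + α * ρ t y) volume a b :=
    fun t a b => intervalIntegrable_const.add ((hInt t a b).const_mul α)
  -- linearization of the cost integral
  have lin : ∀ u p q : ℝ, (∫ y in p..q, (1 + α * ρ u y)) = (q - p) + α * ∫ y in p..q, ρ u y := by
    intro u p q
    rw [intervalIntegral.integral_add intervalIntegrable_const ((hInt u p q).const_mul α),
      intervalIntegral.integral_const, intervalIntegral.integral_const_mul]
    simp
  -- the key quantitative estimate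
  have key : ∀ s ∈ Icc (0:ℝ) T, ∀ t ∈ Icc (0:ℝ) T,
      |ξ t - ξ s| ≤ α / 2 * ∫ x in (-1 : ℝ)..(1 : ℝ), |ρ t x - ρ s x| := by
    intro s hs t ht
    set a := ξ s with ha_def
    set b := ξ t with hb_def
    obtain ⟨ha1, ha2⟩ := hξ_mem s hs
    obtain ⟨hb1, hb2⟩ := hξ_mem t ht
    -- half equations
    have hhalf : ∀ u ∈ Icc (0:ℝ) T,
        2 * ((ξ u - (-1)) + α * ∫ y in (-1:ℝ)..(ξ u), ρ u y)
          = (1 - (-1)) + α * ∫ y in (-1:ℝ)..(1:ℝ), ρ u y := by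
      intro u hu
      have hspl := intervalIntegral.integral_add_adjacent_intervals
        (hInt1 u (-1) (ξ u)) (hInt1 u (ξ u) 1)
      have heq := hξ_eq u hu
      rw [lin, lin, lin] at hspl
      rw [lin, lin] at heq
      linarith
    have Ht := hhalf t ht
    have Hs := hhalf s hs
    -- adjacency splittings
    have hadjP : (∫ y in (-1:ℝ)..a, ρ t y) + (∫ y in a..b, ρ t y) = ∫ y in (-1:ℝ)..b, ρ t y :=
      intervalIntegral.integral_add_adjacent_intervals (hInt t (-1) a) (hInt t a b)
    have hadjT : (∫ y in (-1:ℝ)..a, ρ t y) + (∫ y in a..(1:ℝ), ρ t y) = ∫ y in (-1:ℝ)..(1:ℝ), ρ t y :=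
      intervalIntegral.integral_add_adjacent_intervals (hInt t (-1) a) (hInt t a 1)
    have hadjS : (∫ y in (-1:ℝ)..a, ρ s y) + (∫ y in a..(1:ℝ), ρ s y) = ∫ y in (-1:ℝ)..(1:ℝ), ρ s y :=
      intervalIntegral.integral_add_adjacent_intervals (hInt s (-1) a) (hInt s a 1)
    -- difference integrals
    have hd1 : (∫ y in a..(1:ℝ), (ρ t y - ρ s y))
        = (∫ y in a..(1:ℝ), ρ t y) - ∫ y in a..(1:ℝ), ρ s y :=
      intervalIntegral.integral_sub (hInt t a 1) (hInt s a 1)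
    have hd2 : (∫ y in (-1:ℝ)..a, (ρ t y - ρ s y))
        = (∫ y in (-1:ℝ)..a, ρ t y) - ∫ y in (-1:ℝ)..a, ρ s y :=
      intervalIntegral.integral_sub (hInt t (-1) a) (hInt s (-1) a)
    -- the algebraic identity: 2 E = α (D1 - D2)
    have hE : 2 * ((b - a) + α * ∫ y in a..b, ρ t y)
        = α * ((∫ y in a..(1:ℝ), (ρ t y - ρ s y)) - ∫ y in (-1:ℝ)..a, (ρ t y - ρ s y)) := by
      rw [hd1, hd2]
      linear_combination Ht - Hs + 2*α*hadjP - α*hadjT + α*hadjS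
    -- |b - a| ≤ |E|
    have hEbound : |b - a| ≤ |(b - a) + α * ∫ y in a..b, ρ t y| := by
      rcases le_total a b with h | h
      · have hq : 0 ≤ ∫ y in a..b, ρ t y :=
          intervalIntegral.integral_nonneg h (fun x _ => (hρ_range t x).1)
        have : 0 ≤ α * ∫ y in a..b, ρ t y := mul_nonneg hα hq
        rw [abs_of_nonneg (by linarith), abs_of_nonneg (by linarith)]
        linarith
      · have hq : 0 ≤ ∫ y in b..a, ρ t y :=
          intervalIntegral.integral_nonneg h (fun x _ => (hρ_range t x).1)
        have hsymm : (∫ y in a..b, ρ t y) = - ∫ y in b..a, ρ t y :=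
          intervalIntegral.integral_symm b a
        have : 0 ≤ α * ∫ y in b..a, ρ t y := mul_nonneg hα hq
        rw [abs_of_nonpos (by linarith), abs_of_nonpos (by rw [hsymm]; linarith)]
        rw [hsymm]; linarith
    -- bound the RHS by the L¹ norm
    have habs1 : |∫ y in a..(1:ℝ), (ρ t y - ρ s y)| ≤ ∫ y in a..(1:ℝ), |ρ t y - ρ s y| :=
      intervalIntegral.abs_integral_le_integral_abs ha2.le
    have habs2 : |∫ y in (-1:ℝ)..a, (ρ t y - ρ s y)| ≤ ∫ y in (-1:ℝ)..a, |ρ t y - ρ s y| :=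
      intervalIntegral.abs_integral_le_integral_abs ha1.le
    have hadjA : (∫ y in (-1:ℝ)..a, |ρ t y - ρ s y|) + (∫ y in a..(1:ℝ), |ρ t y - ρ s y|)
        = ∫ y in (-1:ℝ)..(1:ℝ), |ρ t y - ρ s y| :=
      intervalIntegral.integral_add_adjacent_intervals
        ((hInt t (-1) a).sub (hInt s (-1) a)).abs ((hInt t a 1).sub (hInt s a 1)).abs
    have h2 : 2 * |b - a| ≤ α * ∫ y in (-1:ℝ)..(1:ℝ), |ρ t y - ρ s y| := by
      calc 2 * |b - a| ≤ 2 * |(b - a) + α * ∫ y in a..b, ρ t y| := by linarith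
        _ = |2 * ((b - a) + α * ∫ y in a..b, ρ t y)| := by
            rw [abs_mul, abs_of_nonneg (by norm_num : (0:ℝ) ≤ 2)]
        _ = |α * ((∫ y in a..(1:ℝ), (ρ t y - ρ s y)) - ∫ y in (-1:ℝ)..a, (ρ t y - ρ s y))| := by
            rw [hE]
        _ = α * |(∫ y in a..(1:ℝ), (ρ t y - ρ s y)) - ∫ y in (-1:ℝ)..a, (ρ t y - ρ s y)| := by
            rw [abs_mul, abs_of_nonneg hα]
        _ ≤ α * ((∫ y in a..(1:ℝ), |ρ t y - ρ s y|) + ∫ y in (-1:ℝ)..a, |ρ t y - ρ s y|) := by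
            refine mul_le_mul_of_nonneg_left ?_ hα
            calc |(∫ y in a..(1:ℝ), (ρ t y - ρ s y)) - ∫ y in (-1:ℝ)..a, (ρ t y - ρ s y)|
                ≤ |∫ y in a..(1:ℝ), (ρ t y - ρ s y)| + |∫ y in (-1:ℝ)..a, (ρ t y - ρ s y)| :=
                  abs_sub _ _
              _ ≤ _ := add_le_add habs1 habs2
        _ = α * ∫ y in (-1:ℝ)..(1:ℝ), |ρ t y - ρ s y| := by rw [← hadjA]; ring
    have : |ξ t - ξ s| = |b - a| := rfl
    rw [this]
    linarith
  refine ⟨?_, key⟩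
  -- continuity from the quantitative estimate
  rw [Metric.continuousOn_iff]
  intro s hs ε hε
  obtain ⟨δ, hδ, hδ'⟩ := hL1cont s hs (2 * ε / (α + 1)) (by positivity)
  refine ⟨δ, hδ, fun t ht hdist => ?_⟩
  rw [Real.dist_eq] at hdist ⊢
  have hL := hδ' t ht hdist
  have hL0 : 0 ≤ ∫ x in (-1:ℝ)..(1:ℝ), |ρ t x - ρ s x| :=
    intervalIntegral.integral_nonneg (by norm_num) (fun x _ => abs_nonneg _)
  have hbd := key s hs t ht
  have h1 : α / 2 * ∫ x in (-1:ℝ)..(1:ℝ), |ρ t x - ρ s x| ≤ α / 2 * (2 * ε / (α + 1)) :=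
    mul_le_mul_of_nonneg_left hL.le (by positivity)
  have h2 : α / 2 * (2 * ε / (α + 1)) < ε := by
    have hpos : (0:ℝ) < α + 1 := by linarith
    have heq : α / 2 * (2 * ε / (α + 1)) = α * ε / (α + 1) := by
      field_simp
    rw [heq, div_lt_iff₀ hpos]
    nlinarith
  linarith
end
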